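/- Assume g is flat, V^i_j := η^{ik} ∂²h/∂u^k∂u^j = g^{ik}(∂²f/∂u^k∂u^j − Γ^m_{kj} ∂f/∂u^m) on U, let a, b, p, q, h₀, Q, W, φ, Ū, ḡ, Γ̄ be as in the reciprocal-transformation setup with Ū simply connected, assume Dubrovin's flat-pencil conditions hold for (η, g) with vector field ξ and constants (c^{ij}), and let ξ̄ be a smooth vector field on Ū with ∂̄^i ξ̄^k(φ(u)) = ∂^i ξ^k(u) for all u ∈ U. Then (ḡ^{is} η̄^{jt} − η̄^{is} ḡ^{jt}) ∂_{v^s}∂_{v^t} ξ̄^k = 0 on Ū for all indices i, j, k. -/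

import Mathlib

open scoped BigOperators
open Matrix

/-- Partial derivative `∂f/∂xⁱ` at `x`. -/
noncomputable def pd {n : ℕ} (f : (Fin n → ℝ) → ℝ) (i : Fin n) (x : Fin n → ℝ) : ℝ :=
  fderiv ℝ f x (Pi.single i 1)

/-- Christoffel symbols `Γ^k_{ij}` of the metric with contravariant components `gU`
(the `g^{ij}`) and covariant components `gL` (the `g_{ij}`):
`Γ^k_{ij} = (1/2) g^{ks}(∂_i g_{sj} + ∂_j g_{si} − ∂_s g_{ij})`. -/
noncomputable def christoffel {n : ℕ}
    (gU gL : (Fin n → ℝ) → Matrix (Fin n) (Fin n) ℝ)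
    (k i j : Fin n) (x : Fin n → ℝ) : ℝ :=
  (1 / 2) * ∑ s, gU x k s *
    (pd (fun y => gL y s j) i x + pd (fun y => gL y s i) j x - pd (fun y => gL y i j) s x)

/-- Curvature tensor `R_{ijk}{}^s = ∂_i Γ^s_{jk} − ∂_j Γ^s_{ik} + Γ^s_{im}Γ^m_{jk} − Γ^s_{jm}Γ^m_{ik}`. -/
noncomputable def curvature {n : ℕ}
    (gU gL : (Fin n → ℝ) → Matrix (Fin n) (Fin n) ℝ)
    (i j k s : Fin n) (x : Fin n → ℝ) : ℝ :=
  pd (christoffel gU gL s j k) i x - pd (christoffel gU gL s i k) j x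
    + ∑ m, christoffel gU gL s i m x * christoffel gU gL m j k x
    - ∑ m, christoffel gU gL s j m x * christoffel gU gL m i k x

/-- Covariant derivative `∇_k V^i_j = ∂_k V^i_j + Γ^i_{km} V^m_j − Γ^m_{kj} V^i_m`
of a (1,1)-tensor `V`. -/
noncomputable def covDer {n : ℕ}
    (gU gL V : (Fin n → ℝ) → Matrix (Fin n) (Fin n) ℝ)
    (k i j : Fin n) (x : Fin n → ℝ) : ℝ :=
  pd (fun y => V y i j) k x + ∑ m, christoffel gU gL i k m x * V x m j
    - ∑ m, christoffel gU gL m k j x * V x i m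

/-- Raised partial derivative `∂^i := η^{is} ∂_{u^s}`. -/
noncomputable def pdUp {n : ℕ} (η : Matrix (Fin n) (Fin n) ℝ)
    (f : (Fin n → ℝ) → ℝ) (i : Fin n) (x : Fin n → ℝ) : ℝ :=
  ∑ s, η i s * pd f s x


private lemma pd_congrOn {n : ℕ} {U : Set (Fin n → ℝ)} (hU : IsOpen U) {x : Fin n → ℝ} (hx : x ∈ U)
    {f g : (Fin n → ℝ) → ℝ} (hfg : ∀ y ∈ U, f y = g y) (i : Fin n) :
    pd f i x = pd g i x := by
  have h : f =ᶠ[nhds x] g := Filter.eventuallyEq_of_mem (hU.mem_nhds hx) hfg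
  unfold pd
  rw [h.fderiv_eq]

private lemma contDiffOn_pd {n : ℕ} {U : Set (Fin n → ℝ)} (hU : IsOpen U)
    {F : (Fin n → ℝ) → ℝ} (hF : ContDiffOn ℝ (⊤ : ℕ∞) F U) (j : Fin n) :
    ContDiffOn ℝ 1 (pd F j) U := by
  have h1 : ContDiffOn ℝ 1 (fderiv ℝ F) U := hF.fderiv_of_isOpen hU (by exact WithTop.coe_le_coe.mpr le_top)
  exact h1.clm_apply contDiffOn_const

private lemma pd_differentiableAt {n : ℕ} {U : Set (Fin n → ℝ)} (hU : IsOpen U)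
    {F : (Fin n → ℝ) → ℝ} (hF : ContDiffOn ℝ (⊤ : ℕ∞) F U) {x : Fin n → ℝ} (hx : x ∈ U) (j : Fin n) :
    DifferentiableAt ℝ (pd F j) x :=
  ((contDiffOn_pd hU hF j).differentiableOn one_ne_zero).differentiableAt (hU.mem_nhds hx)

private lemma pd_pd_symm {n : ℕ} {U : Set (Fin n → ℝ)} (hU : IsOpen U)
    {F : (Fin n → ℝ) → ℝ} (hF : ContDiffOn ℝ (⊤ : ℕ∞) F U) {x : Fin n → ℝ} (hx : x ∈ U) (j k : Fin n) :
    pd (pd F j) k x = pd (pd F k) j x := by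
  have hf' : ∀ᶠ y in nhds x, HasFDerivAt F (fderiv ℝ F y) y := by
    filter_upwards [hU.mem_nhds hx] with y hy
    exact (((hF.differentiableOn (by simp)).differentiableAt (hU.mem_nhds hy))).hasFDerivAt
  have hdF : DifferentiableAt ℝ (fderiv ℝ F) x :=
    (((hF.fderiv_of_isOpen hU (by exact WithTop.coe_le_coe.mpr le_top) : ContDiffOn ℝ 1 _ U)).differentiableOn one_ne_zero).differentiableAt
      (hU.mem_nhds hx)
  have hsymm := second_derivative_symmetric_of_eventually hf' hdF.hasFDerivAt
    (Pi.single k 1) (Pi.single j 1)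
  have key : ∀ a b : Fin n, pd (pd F a) b x
      = fderiv ℝ (fderiv ℝ F) x (Pi.single b 1) (Pi.single a 1) := by
    intro a b
    have e : pd (pd F a) b x
        = fderiv ℝ (fun y => (fderiv ℝ F y) (Pi.single a (1:ℝ))) x (Pi.single b 1) := rfl
    rw [e, fderiv_clm_apply hdF (differentiableAt_const _)]
    simp
  rw [key, key, hsymm]

private lemma pd_comp {n : ℕ} (G : (Fin n → ℝ) → ℝ) (φ : (Fin n → ℝ) → (Fin n → ℝ)) (x : Fin n → ℝ)
    (hG : DifferentiableAt ℝ G (φ x)) (hφ : ∀ l, DifferentiableAt ℝ (fun u => φ u l) x)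
    (t : Fin n) :
    pd (fun u => G (φ u)) t x = ∑ l, pd G l (φ x) * pd (fun u => φ u l) t x := by
  have hφ' : DifferentiableAt ℝ φ x := differentiableAt_pi.mpr hφ
  have hcomp : fderiv ℝ (G ∘ φ) x = (fderiv ℝ G (φ x)).comp (fderiv ℝ φ x) :=
    fderiv_comp x hG hφ'
  have hpi := fderiv_pi (𝕜 := ℝ) (φ := fun l u => φ u l) (x := x) hφ
  have hw : ∀ l, fderiv ℝ φ x (Pi.single t 1) l = pd (fun u => φ u l) t x := by
    intro l
    rw [show fderiv ℝ φ x = fderiv ℝ (fun u l => φ u l) x from rfl, hpi,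
      ContinuousLinearMap.pi_apply]
    rfl
  have step1 : pd (fun u => G (φ u)) t x = fderiv ℝ G (φ x) (fderiv ℝ φ x (Pi.single t 1)) := by
    show fderiv ℝ (G ∘ φ) x (Pi.single t 1) = _
    rw [hcomp]; rfl
  rw [step1]
  set w := fderiv ℝ φ x (Pi.single t 1) with hwdef
  have hwsum : w = ∑ l, w l • (Pi.single l 1 : Fin n → ℝ) := by
    funext m
    simp [Finset.sum_apply, Pi.single_apply, eq_comm]
  rw [hwsum, map_sum]
  refine Finset.sum_congr rfl fun l _ => ?_
  rw [_root_.map_smul, smul_eq_mul, hw l]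
  show pd (fun u => φ u l) t x * pd G l (φ x) = _
  ring

private lemma triple_entry {n : ℕ} (A M C : Matrix (Fin n) (Fin n) ℝ) (i j : Fin n) :
    (A * M * C) i j = ∑ s, ∑ t, A i s * C t j * M s t := by
  simp only [Matrix.mul_apply, Finset.sum_mul]
  rw [Finset.sum_comm]
  exact Finset.sum_congr rfl fun s _ => Finset.sum_congr rfl fun t _ => by ring


theorem stmt_11
    (n : ℕ) (hn : 1 ≤ n)
    (U : Set (Fin n → ℝ)) (hU_open : IsOpen U) (hU_conn : IsConnected U)
    (hU_sc : SimplyConnectedSpace U)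
    (eta etaL : Matrix (Fin n) (Fin n) ℝ)
    (heta_symm : eta.IsSymm) (heta_inv : eta * etaL = 1)
    (g gL : (Fin n → ℝ) → Matrix (Fin n) (Fin n) ℝ)
    (hg_smooth : ∀ i j, ContDiffOn ℝ (⊤ : ℕ∞) (fun x => g x i j) U)
    (hgL_smooth : ∀ i j, ContDiffOn ℝ (⊤ : ℕ∞) (fun x => gL x i j) U)
    (hg_symm : ∀ x ∈ U, (g x).IsSymm)
    (hg_inv : ∀ x ∈ U, g x * gL x = 1)
    (hg_flat : ∀ x ∈ U, ∀ i j k s, curvature g gL i j k s x = 0)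
    (h f : (Fin n → ℝ) → ℝ) (hh : ContDiffOn ℝ (⊤ : ℕ∞) h U) (hf : ContDiffOn ℝ (⊤ : ℕ∞) f U)
    (V : (Fin n → ℝ) → Matrix (Fin n) (Fin n) ℝ)
    (hVh : ∀ x ∈ U, ∀ i j, V x i j = ∑ k, eta i k * pd (pd h j) k x)
    (hVf : ∀ x ∈ U, ∀ i j, V x i j =
      ∑ k, g x i k * (pd (pd f j) k x - ∑ m, christoffel g gL m k j x * pd f m x))
    (a b p q : ℝ) (habpq : a * q - b * p ≠ 0)
    (Q W : (Fin n → ℝ) → Matrix (Fin n) (Fin n) ℝ)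
    (hQ : ∀ x ∈ U, Q x = q • (1 : Matrix (Fin n) (Fin n) ℝ) - p • V x)
    (hQW : ∀ x ∈ U, Q x * W x = 1 ∧ W x * Q x = 1)
    (phi psi : (Fin n → ℝ) → (Fin n → ℝ))
    (hphi : ∀ x ∈ U, ∀ i, phi x i = q * x i - p * ∑ k, eta i k * pd h k x)
    (hphi_smooth : ∀ i, ContDiffOn ℝ (⊤ : ℕ∞) (fun x => phi x i) U)
    (hphi_inj : Set.InjOn phi U)
    (hUb_open : IsOpen (phi '' U))
    (hpsi : ∀ x ∈ U, psi (phi x) = x)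
    (hpsi_smooth : ∀ i, ContDiffOn ℝ (⊤ : ℕ∞) (fun v => psi v i) (phi '' U))
    (hJac : ∀ x ∈ U, ∀ i j, pd (fun y => phi y i) j x = Q x i j)
    (gb gbL : (Fin n → ℝ) → Matrix (Fin n) (Fin n) ℝ)
    (hgb : ∀ x ∈ U, gb (phi x) = g x)
    (hgbL : ∀ x ∈ U, gbL (phi x) = gL x)
    (hgb_smooth : ∀ i j, ContDiffOn ℝ (⊤ : ℕ∞) (fun v => gb v i j) (phi '' U))
    (hgbL_smooth : ∀ i j, ContDiffOn ℝ (⊤ : ℕ∞) (fun v => gbL v i j) (phi '' U))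
    (hUb_sc : SimplyConnectedSpace (phi '' U))
    (Del : (Fin n → ℝ) → Fin n → Fin n → Fin n → ℝ)
    (hDel : ∀ x, ∀ i j k, Del x i j k =
      ∑ s, eta i s * (-∑ l, g x j l * christoffel g gL k l s x))
    (xi : (Fin n → ℝ) → Fin n → ℝ)
    (hxi_smooth : ∀ k, ContDiffOn ℝ (⊤ : ℕ∞) (fun x => xi x k) U)
    (c : Matrix (Fin n) (Fin n) ℝ) (hc_symm : c.IsSymm)
    (hD1 : ∀ x ∈ U, ∀ i j k, Del x i j k = pdUp eta (pdUp eta (fun y => xi y k) j) i x)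
    (hD2 : ∀ x ∈ U, ∀ i j, g x i j =
      pdUp eta (fun y => xi y j) i x + pdUp eta (fun y => xi y i) j x + c i j)
    (hD3 : ∀ x ∈ U, ∀ i j k l,
      ∑ s, (∑ t, etaL s t * Del x t i j) * (∑ t, etaL l t * Del x t s k) =
      ∑ s, (∑ t, etaL s t * Del x t i k) * (∑ t, etaL l t * Del x t s j))
    (hD4 : ∀ x ∈ U, ∀ i j k,
      ∑ m, ∑ l, (g x i m * eta j l - eta i m * g x j l) *
        pd (pd (fun y => xi y k) l) m x = 0)
    (xib : (Fin n → ℝ) → Fin n → ℝ)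
    (hxib_smooth : ∀ k, ContDiffOn ℝ (⊤ : ℕ∞) (fun v => xib v k) (phi '' U))
    (hxib : ∀ x ∈ U, ∀ i k,
      pdUp eta (fun y => xib y k) i (phi x) = pdUp eta (fun y => xi y k) i x)
    :
    ∀ v ∈ phi '' U, ∀ i j k,
      ∑ s, ∑ t, (gb v i s * eta j t - eta i s * gb v j t) *
        pd (pd (fun y => xib y k) t) s v = 0 := by
  intro v hv i j k
  obtain ⟨x, hx, rfl⟩ := hv
  have hvmem : phi x ∈ phi '' U := Set.mem_image_of_mem _ hx
  have hetaL : etaL * eta = 1 := mul_eq_one_comm.mp heta_inv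
  have hgsx : (g x)ᵀ = g x := (hg_symm x hx).eq
  have hetaap : ∀ a b, eta a b = eta b a := fun a b => heta_symm.apply b a
  have hgap : ∀ a b, g x a b = g x b a := fun a b => (hg_symm x hx).apply b a
  have hgLsym : ∀ y ∈ U, (gL y)ᵀ = gL y := by
    intro y hy
    have h1 := hg_inv y hy
    calc (gL y)ᵀ = (gL y)ᵀ * (g y * gL y) := by rw [h1, mul_one]
      _ = ((gL y)ᵀ * (g y)ᵀ) * gL y := by rw [(hg_symm y hy).eq, Matrix.mul_assoc]
      _ = (g y * gL y)ᵀ * gL y := by rw [Matrix.transpose_mul]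
      _ = gL y := by rw [h1, Matrix.transpose_one, one_mul]
  set B : Matrix (Fin n) (Fin n) ℝ :=
    fun s t => pd (pd (fun y => xib y k) t) s (phi x) with hBdef
  set H : Matrix (Fin n) (Fin n) ℝ :=
    fun t s => pd (pd (fun y => xi y k) s) t x with hHdef
  -- Step A : gradients agree
  have gradEq : ∀ y ∈ U, ∀ s, pd (fun z => xib z k) s (phi y) = pd (fun z => xi z k) s y := by
    intro y hy
    have hvec : eta.mulVec (fun s => pd (fun z => xib z k) s (phi y)) =
        eta.mulVec (fun s => pd (fun z => xi z k) s y) := by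
      funext i'
      have h2 := hxib y hy i' k
      simpa [Matrix.mulVec, dotProduct, pdUp] using h2
    have h3 := congrArg etaL.mulVec hvec
    rw [Matrix.mulVec_mulVec, Matrix.mulVec_mulVec, hetaL, Matrix.one_mulVec,
      Matrix.one_mulVec] at h3
    intro s
    exact congrFun h3 s
  -- Step B : chain rule, H = Qᵀ B
  have hQtB : H = (Q x)ᵀ * B := by
    ext t s
    have hGdiff : DifferentiableAt ℝ (pd (fun z => xib z k) s) (phi x) :=
      pd_differentiableAt hUb_open (hxib_smooth k) hvmem s
    have hphidiff : ∀ l, DifferentiableAt ℝ (fun u => phi u l) x := fun l =>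
      ((hphi_smooth l).differentiableOn (by simp)).differentiableAt (hU_open.mem_nhds hx)
    have hcomp := pd_comp (pd (fun z => xib z k) s) phi x hGdiff hphidiff t
    have hcongr : pd (fun u => pd (fun z => xib z k) s (phi u)) t x
        = pd (pd (fun z => xi z k) s) t x :=
      pd_congrOn hU_open hx (fun y hy => gradEq y hy s) t
    show pd (pd (fun z => xi z k) s) t x = ((Q x)ᵀ * B) t s
    rw [Matrix.mul_apply, ← hcongr, hcomp]
    refine Finset.sum_congr rfl fun l _ => ?_
    rw [hJac x hx l t, Matrix.transpose_apply]
    show pd (pd (fun z => xib z k) s) l (phi x) * Q x l t = Q x l t * B l s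
    rw [hBdef]
    ring
  have hBW : B = (W x)ᵀ * H := by
    rw [hQtB, ← Matrix.mul_assoc, ← Matrix.transpose_mul, (hQW x hx).1,
      Matrix.transpose_one, one_mul]
  -- Step D : V eta = eta Vᵀ
  have hVeta : V x * eta = eta * (V x)ᵀ := by
    have hVHh : V x = eta * (Matrix.of fun a b => pd (pd h b) a x) := by
      ext a b
      rw [hVh x hx a b, Matrix.mul_apply]
      simp
    have hHhsym : (Matrix.of fun a b => pd (pd h b) a x)ᵀ
        = (Matrix.of fun a b => pd (pd h b) a x) := by
      ext a b
      show pd (pd h a) b x = pd (pd h b) a x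
      exact pd_pd_symm hU_open hh hx a b
    rw [hVHh, Matrix.transpose_mul, hHhsym, heta_symm.eq, Matrix.mul_assoc]
  -- Step E : V g = g Vᵀ
  have hVg : V x * g x = g x * (V x)ᵀ := by
    have hchr : ∀ (m a b : Fin n), christoffel g gL m a b x = christoffel g gL m b a x := by
      intro m a' b'
      unfold christoffel
      congr 1
      refine Finset.sum_congr rfl fun s _ => ?_
      have h3 : pd (fun y => gL y a' b') s x = pd (fun y => gL y b' a') s x :=
        pd_congrOn hU_open hx (fun y hy => by
          have h4 := congrFun (congrFun (hgLsym y hy) b') a'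
          simpa using h4) s
      rw [h3]
      ring
    have hVT : V x = g x * (Matrix.of fun a b =>
        pd (pd f b) a x - ∑ m, christoffel g gL m a b x * pd f m x) := by
      ext a b
      rw [hVf x hx a b, Matrix.mul_apply]
      simp
    have hTsym : (Matrix.of fun a b =>
        pd (pd f b) a x - ∑ m, christoffel g gL m a b x * pd f m x)ᵀ
        = (Matrix.of fun a b =>
        pd (pd f b) a x - ∑ m, christoffel g gL m a b x * pd f m x) := by
      ext a b
      show pd (pd f a) b x - ∑ m, christoffel g gL m b a x * pd f m x
        = pd (pd f b) a x - ∑ m, christoffel g gL m a b x * pd f m x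
      rw [pd_pd_symm hU_open hf hx a b]
      congr 1
      exact Finset.sum_congr rfl fun m _ => by rw [hchr m b a]
    rw [hVT, Matrix.transpose_mul, hTsym, hgsx, Matrix.mul_assoc]
  -- Step F : g Wᵀ = W g and eta Wᵀ = W eta
  have hQcomm : ∀ A : Matrix (Fin n) (Fin n) ℝ, V x * A = A * (V x)ᵀ →
      A * (W x)ᵀ = W x * A := by
    intro A hA
    have hQA : Q x * A = A * (Q x)ᵀ := by
      rw [hQ x hx, Matrix.transpose_sub, Matrix.transpose_smul, Matrix.transpose_smul,
        Matrix.transpose_one, sub_mul, mul_sub, Matrix.smul_mul, Matrix.smul_mul,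
        Matrix.mul_smul, Matrix.mul_smul, one_mul, mul_one, hA]
    have h1 : (Q x)ᵀ * (W x)ᵀ = 1 := by
      rw [← Matrix.transpose_mul, (hQW x hx).2, Matrix.transpose_one]
    calc A * (W x)ᵀ
        = (W x * Q x) * (A * (W x)ᵀ) := by rw [(hQW x hx).2, one_mul]
      _ = W x * (Q x * (A * (W x)ᵀ)) := Matrix.mul_assoc _ _ _
      _ = W x * ((Q x * A) * (W x)ᵀ) := by
          rw [show Q x * (A * (W x)ᵀ) = (Q x * A) * (W x)ᵀ from (Matrix.mul_assoc _ _ _).symm]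
      _ = W x * (A * ((Q x)ᵀ * (W x)ᵀ)) := by rw [hQA, Matrix.mul_assoc]
      _ = W x * A := by rw [h1, mul_one]
  have hgW : g x * (W x)ᵀ = W x * g x := hQcomm (g x) hVg
  have hetaW : eta * (W x)ᵀ = W x * eta := hQcomm eta hVeta
  -- Step G : g H eta = eta H g  (from hD4)
  have hgH : g x * H * eta = eta * H * g x := by
    ext i' j'
    rw [triple_entry, triple_entry]
    have h4 : ∑ m, ∑ l, (g x i' m * eta j' l - eta i' m * g x j' l) * H m l = 0 := by
      rw [hHdef]
      exact hD4 x hx i' j' k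
    have h5 : ∑ m, ∑ l, g x i' m * eta j' l * H m l
        = ∑ m, ∑ l, eta i' m * g x j' l * H m l := by
      have h6 := h4
      simp only [sub_mul, Finset.sum_sub_distrib] at h6
      linarith
    have e1 : ∑ s, ∑ t, g x i' s * eta t j' * H s t
        = ∑ s, ∑ t, g x i' s * eta j' t * H s t :=
      Finset.sum_congr rfl fun s _ => Finset.sum_congr rfl fun t _ => by rw [hetaap t j']
    have e2 : ∑ s, ∑ t, eta i' s * g x t j' * H s t
        = ∑ s, ∑ t, eta i' s * g x j' t * H s t :=
      Finset.sum_congr rfl fun s _ => Finset.sum_congr rfl fun t _ => by rw [hgap t j']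
    rw [e1, e2]
    exact h5
  -- Final assembly
  have final : g x * B * eta = eta * B * g x := by
    calc g x * B * eta
        = W x * (g x * H * eta) := by
          rw [hBW, ← Matrix.mul_assoc (g x), hgW, Matrix.mul_assoc (W x) (g x) H,
            Matrix.mul_assoc]
      _ = W x * (eta * H * g x) := by rw [hgH]
      _ = eta * B * g x := by
          rw [hBW, ← Matrix.mul_assoc eta, hetaW]
          simp only [Matrix.mul_assoc]
  have expand : ∑ s, ∑ t, (g x i s * eta j t - eta i s * g x j t) * B s t
      = (g x * B * eta) i j - (eta * B * g x) i j := by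
    rw [triple_entry, triple_entry, ← Finset.sum_sub_distrib]
    refine Finset.sum_congr rfl fun s _ => ?_
    rw [← Finset.sum_sub_distrib]
    refine Finset.sum_congr rfl fun t _ => ?_
    rw [hetaap t j, hgap t j]
    ring
  have hgbx : gb (phi x) = g x := hgb x hx
  calc ∑ s, ∑ t, (gb (phi x) i s * eta j t - eta i s * gb (phi x) j t) *
        pd (pd (fun y => xib y k) t) s (phi x)
      = ∑ s, ∑ t, (g x i s * eta j t - eta i s * g x j t) * B s t := by
        rw [hgbx, hBdef]
    _ = (g x * B * eta) i j - (eta * B * g x) i j := expand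
    _ = 0 := by rw [final, sub_self]
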